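/- arXiv:2307.12680 — 7 statements merged into one kernel-verified Lean document; each statement's English description precedes it below -/
import Mathlib

section
/- Let G be a finite Abelian p-group with basis {Q_1,...,Q_N}. If an element K of G is primitive with respect to this basis (i.e., when K = q_1 Q_1 + ... + q_N Q_N, p does not divide q_i for some i), then K is primitive with respect to any other basis of G. -/
/-- A basis of a finite abelian group: every element has a unique representation
`∑ i, b i • Q i` with `0 ≤ b i < |Q i|`. -/
def IsBasis {G : Type*} [AddCommGroup G] {ι : Type*} [Fintype ι] (Q : ι → G) : Prop :=
  ∀ g : G, ∃! b : ι → ℕ,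
    (∀ i, b i < addOrderOf (Q i)) ∧ g = ∑ i, b i • Q i

/-- `K` is primitive w.r.t. the basis `Q` if, writing `K = ∑ i, q i • Q i` with coefficients
in canonical range, `p` does not divide some coefficient `q i`. -/
def IsPrimitive (p : ℕ) {G : Type*} [AddCommGroup G] {ι : Type*} [Fintype ι]
    (Q : ι → G) (K : G) : Prop :=
  ∃ q : ι → ℕ, (∀ i, q i < addOrderOf (Q i)) ∧ K = ∑ i, q i • Q i ∧ ∃ i, ¬ p ∣ q i

/-- The valuation `ν_p` of `K` relative to the basis `Q`: the largest `r` such that `p ^ r`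
divides all the (canonical) coefficients of `K`, with `ν_p 0 = ∞`. -/
noncomputable def nuP (p : ℕ) {G : Type*} [AddCommGroup G] {ι : Type*} [Fintype ι]
    (Q : ι → G) (K : G) : ℕ∞ :=
  sSup (((↑) : ℕ → ℕ∞) '' {r : ℕ | ∀ q : ι → ℕ,
    ((∀ i, q i < addOrderOf (Q i)) ∧ K = ∑ i, q i • Q i) → ∀ i, p ^ r ∣ q i})

/-!
With respect to any basis, `K` fails to be primitive exactly when `K ∈ p • G`, a condition that
does not mention the basis. If every coefficient of `K` is divisible by `p`, then `K = p • K'`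
visibly. Conversely, if `K = p • K'` and `c` are the coefficients of `K'`, then the canonical
coefficients of `K` are `p * c i` reduced modulo the order of `Q i`; that order is a power of `p`,
so the reduction stays divisible by `p`.
-/

theorem Nat.Prime.dvd_mul_mod_of_dvd_pow {p n k : ℕ} (hp : p.Prime) (hn : n ∣ p ^ k) (c : ℕ) :
    p ∣ p * c % n := by
  obtain ⟨m, -, rfl⟩ := (Nat.dvd_prime_pow hp).1 hn
  rcases m with _ | m
  · rw [pow_zero, Nat.mod_one]
    exact dvd_zero p
  · exact (Nat.dvd_mod_iff (dvd_pow_self p m.succ_ne_zero)).2 (dvd_mul_right p c)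

section Primitive

variable {G : Type*} [AddCommGroup G] {ι : Type*} [Fintype ι] {p : ℕ} {Q : ι → G}

theorem exists_nsmul_eq_of_not_isPrimitive (hQ : IsBasis Q) {K : G}
    (hK : ¬ IsPrimitive p Q K) : ∃ K', p • K' = K := by
  obtain ⟨q, ⟨hq_lt, rfl⟩, -⟩ := hQ K
  have hdvd : ∀ i, p ∣ q i := fun i => by_contra fun h => hK ⟨q, hq_lt, rfl, i, h⟩
  refine ⟨∑ i, (q i / p) • Q i, ?_⟩
  rw [Finset.smul_sum]
  refine Finset.sum_congr rfl fun i _ => ?_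
  rw [← mul_nsmul', Nat.mul_div_cancel' (hdvd i)]

theorem not_isPrimitive_nsmul (hp : p.Prime) (hG : ∀ g : G, ∃ k : ℕ, p ^ k • g = 0)
    (hQ : IsBasis Q) (K' : G) : ¬ IsPrimitive p Q (p • K') := by
  rintro ⟨q, hq_lt, hq_eq, i, hi⟩
  obtain ⟨c, ⟨-, rfl⟩, -⟩ := hQ K'
  set r : ι → ℕ := fun i => p * c i % addOrderOf (Q i)
  have hr_lt : ∀ i, r i < addOrderOf (Q i) := fun i => Nat.mod_lt _ (Nat.zero_lt_of_lt (hq_lt i))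
  have hr_eq : p • ∑ i, c i • Q i = ∑ i, r i • Q i := by
    rw [Finset.smul_sum]
    refine Finset.sum_congr rfl fun i _ => ?_
    rw [mod_addOrderOf_nsmul, mul_nsmul']
  have hr_dvd : ∀ i, p ∣ r i := fun i =>
    have ⟨k, hk⟩ := hG (Q i)
    hp.dvd_mul_mod_of_dvd_pow (addOrderOf_dvd_of_nsmul_eq_zero hk) (c i)
  obtain ⟨b, -, huniq⟩ := hQ (p • ∑ i, c i • Q i)
  have hqr : q = r := (huniq q ⟨hq_lt, hq_eq⟩).trans (huniq r ⟨hr_lt, hr_eq⟩).symm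
  exact hi (hqr ▸ hr_dvd i)

theorem isPrimitive_iff_forall_nsmul_ne (hp : p.Prime) (hG : ∀ g : G, ∃ k : ℕ, p ^ k • g = 0)
    (hQ : IsBasis Q) (K : G) : IsPrimitive p Q K ↔ ∀ K', p • K' ≠ K :=
  ⟨fun hK K' hK' => not_isPrimitive_nsmul hp hG hQ K' (hK' ▸ hK),
    fun h => by_contra fun hK => (exists_nsmul_eq_of_not_isPrimitive hQ hK).elim h⟩

end Primitive

theorem primitive_basis_independent_general {G : Type*} [AddCommGroup G]
    {p : ℕ} (hp : p.Prime) (hG : ∀ g : G, ∃ k : ℕ, p ^ k • g = 0)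
    {N : ℕ} (Q P : Fin N → G) (hQ : IsBasis Q) (hP : IsBasis P) (K : G)
    (hK : IsPrimitive p Q K) : IsPrimitive p P K :=
  (isPrimitive_iff_forall_nsmul_ne hp hG hP K).2 ((isPrimitive_iff_forall_nsmul_ne hp hG hQ K).1 hK)

/-- Primitivity is independent of the basis. -/
theorem primitive_basis_independent {G : Type*} [AddCommGroup G] [Fintype G]
    {p : ℕ} (hp : p.Prime) (hG : ∀ g : G, ∃ k : ℕ, p ^ k • g = 0)
    {N : ℕ} (Q P : Fin N → G) (hQ : IsBasis Q) (hP : IsBasis P) (K : G)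
    (hK : IsPrimitive p Q K) : IsPrimitive p P K :=
  primitive_basis_independent_general hp hG Q P hQ hP K hK
end

section
/- Let G be a finite Abelian p-group with basis {Q_1,...,Q_N}. Define nu_p(K) for a nonzero K = q_1 Q_1 + ... + q_N Q_N as the largest nonnegative integer r such that p^r divides every q_i. Then nu_p is well defined: if K = q_1 Q_1 + ... + q_N Q_N = m_1 P_1 + ... + m_N P_N for two bases {Q_i} and {P_i}, the value of nu_p computed from the q_i equals the value computed from the m_i. -/
theorem Nat.pow_dvd_mul_mod_pow (p r s b : ℕ) : p ^ r ∣ p ^ r * b % p ^ s := by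
  rcases le_total s r with hsr | hrs
  · rw [Nat.mod_eq_zero_of_dvd ((pow_dvd_pow p hsr).mul_right b)]
    exact dvd_zero _
  · exact (Nat.dvd_mod_iff (pow_dvd_pow p hrs)).mpr (dvd_mul_right _ _)

theorem exists_addOrderOf_eq_prime_pow_of_nsmul_eq_zero {G : Type*} [AddMonoid G] {p k : ℕ}
    (hp : p.Prime) {x : G} (hx : p ^ k • x = 0) : ∃ s, addOrderOf x = p ^ s := by
  obtain ⟨s, -, hs⟩ := (Nat.dvd_prime_pow hp).mp (addOrderOf_dvd_of_nsmul_eq_zero hx)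
  exact ⟨s, hs⟩

section Basis

variable {G : Type*} [AddCommGroup G] {ι : Type*} [Fintype ι]

theorem nsmul_sum_eq_sum_mod_addOrderOf (Q : ι → G) (n : ℕ) (b : ι → ℕ) :
    n • ∑ i, b i • Q i = ∑ i, (n * b i % addOrderOf (Q i)) • Q i := by
  simp only [Finset.smul_sum, smul_smul, mod_addOrderOf_nsmul]

theorem IsBasis.pow_dvd_coeffs_iff {p : ℕ} {Q : ι → G} (hQ : IsBasis Q)
    (hQp : ∀ i, ∃ s, addOrderOf (Q i) = p ^ s) {K : G} {q : ι → ℕ}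
    (hq : (∀ i, q i < addOrderOf (Q i)) ∧ K = ∑ i, q i • Q i) (r : ℕ) :
    (∀ i, p ^ r ∣ q i) ↔ ∃ g : G, K = p ^ r • g := by
  constructor
  · intro hdvd
    refine ⟨∑ i, (q i / p ^ r) • Q i, ?_⟩
    simp only [hq.2, Finset.smul_sum, smul_smul, Nat.mul_div_cancel' (hdvd _)]
  · rintro ⟨g, rfl⟩
    obtain ⟨b, ⟨-, rfl⟩, -⟩ := hQ g
    have hcanon : (∀ i, p ^ r * b i % addOrderOf (Q i) < addOrderOf (Q i)) ∧
        p ^ r • ∑ i, b i • Q i = ∑ i, (p ^ r * b i % addOrderOf (Q i)) • Q i :=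
      ⟨fun i => Nat.mod_lt _ ((Nat.zero_le _).trans_lt (hq.1 i)),
        nsmul_sum_eq_sum_mod_addOrderOf Q _ b⟩
    rw [(hQ _).unique hq hcanon]
    intro i
    obtain ⟨s, hs⟩ := hQp i
    change p ^ r ∣ p ^ r * b i % addOrderOf (Q i)
    rw [hs]
    exact Nat.pow_dvd_mul_mod_pow p r s (b i)

end Basis

theorem nuP_well_defined_general {G : Type*} [AddCommGroup G]
    {p : ℕ} (hp : p.Prime) (hG : ∀ g : G, ∃ k : ℕ, p ^ k • g = 0)
    {N : ℕ} (Q P : Fin N → G) (hQ : IsBasis Q) (hP : IsBasis P)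
    (K : G) (q m : Fin N → ℕ)
    (hq : (∀ i, q i < addOrderOf (Q i)) ∧ K = ∑ i, q i • Q i)
    (hm : (∀ i, m i < addOrderOf (P i)) ∧ K = ∑ i, m i • P i) :
    ∀ r : ℕ, (∀ i, p ^ r ∣ q i) ↔ (∀ i, p ^ r ∣ m i) := by
  have horder (x : G) : ∃ s, addOrderOf x = p ^ s :=
    let ⟨_, hk⟩ := hG x
    exists_addOrderOf_eq_prime_pow_of_nsmul_eq_zero hp hk
  intro r
  rw [hQ.pow_dvd_coeffs_iff (fun i => horder (Q i)) hq r,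
    hP.pow_dvd_coeffs_iff (fun i => horder (P i)) hm r]

/-- `ν_p` is well defined: if `K ≠ 0` is represented by coefficients `q` w.r.t. basis `Q`
and by `m` w.r.t. basis `P` (both in canonical range), then for every `r`, `p ^ r` divides all
the `q i` iff it divides all the `m i`; hence the largest such `r` is the same. -/
theorem nuP_well_defined {G : Type*} [AddCommGroup G] [Fintype G]
    {p : ℕ} (hp : p.Prime) (hG : ∀ g : G, ∃ k : ℕ, p ^ k • g = 0)
    {N : ℕ} (Q P : Fin N → G) (hQ : IsBasis Q) (hP : IsBasis P)
    (K : G) (hK : K ≠ 0) (q m : Fin N → ℕ)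
    (hq : (∀ i, q i < addOrderOf (Q i)) ∧ K = ∑ i, q i • Q i)
    (hm : (∀ i, m i < addOrderOf (P i)) ∧ K = ∑ i, m i • P i) :
    ∀ r : ℕ, (∀ i, p ^ r ∣ q i) ↔ (∀ i, p ^ r ∣ m i) :=
  nuP_well_defined_general hp hG Q P hQ hP K q m hq hm
end

section
/- Let G be a finite Abelian p-group with sorted basis {Q_1,...,Q_N} (orders |Q_i| = p^{e_i} with e_1 <= ... <= e_N). Let Q = q_1 Q_1 + ... + q_N Q_N be primitive and let k be the largest index with p not dividing q_k. If the order of Q equals p^{e_k}, then {Q_1,...,Q_{k-1}, Q, Q_{k+1},...,Q_N} is a basis of G; in particular Q extends to a basis of G. -/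
/-!
Since `p ∤ q k` and `|Q k|` is a power of `p`, `q k` is invertible modulo `|Q k|`, so `Q k` is a
multiple of `q k • Q k = Q' - ∑_{i ≠ k} q i • Q i`. Hence the new family still generates `G`.
Its orders are those of the old basis, whose product is `|G|`; a generating family whose orders
multiply to `|G|` is a basis, because its coefficient map from `∏ i, Fin |R i|` onto `G` is a
surjection between sets of the same size.
-/

open Function Submodule

section CoeffSum

variable {G ι : Type*} [AddCommGroup G] [Fintype ι]

def coeffSum (R : ι → G) (c : ∀ i, Fin (addOrderOf (R i))) : G :=
  ∑ i, (c i : ℕ) • R i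

theorem isBasis_iff_bijective_coeffSum (R : ι → G) :
    IsBasis R ↔ Bijective (coeffSum R) := by
  constructor
  · intro hR
    refine ⟨fun c₁ c₂ hc => ?_, fun g => ?_⟩
    · obtain ⟨b, -, hb⟩ := hR (coeffSum R c₁)
      have h₁ : (fun i => (c₁ i : ℕ)) = b := hb _ ⟨fun i => (c₁ i).2, rfl⟩
      have h₂ : (fun i => (c₂ i : ℕ)) = b := hb _ ⟨fun i => (c₂ i).2, hc⟩
      exact funext fun i => Fin.ext (congrFun (h₁.trans h₂.symm) i)
    · obtain ⟨b, ⟨hblt, hb⟩, -⟩ := hR g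
      exact ⟨fun i => ⟨b i, hblt i⟩, hb.symm⟩
  · intro hR g
    obtain ⟨c, rfl⟩ := hR.surjective g
    refine ⟨fun i => c i, ⟨fun i => (c i).2, rfl⟩, fun b ⟨hblt, hb⟩ => ?_⟩
    have : (fun i => (⟨b i, hblt i⟩ : Fin _)) = c := hR.injective hb.symm
    exact funext fun i => congrArg Fin.val (congrFun this i)

theorem span_subset_range_coeffSum [Finite G] (R : ι → G) :
    (span ℤ (Set.range R) : Set G) ⊆ Set.range (coeffSum R) := by
  intro g hg
  obtain ⟨c, rfl⟩ := (mem_span_range_iff_exists_fun ℤ).mp hg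
  have hpos : ∀ i, (0 : ℤ) < addOrderOf (R i) := fun i => by exact_mod_cast addOrderOf_pos (R i)
  refine ⟨fun i => ⟨(c i % addOrderOf (R i)).toNat, ?_⟩, Finset.sum_congr rfl fun i _ => ?_⟩
  · have := Int.emod_nonneg (c i) (hpos i).ne'
    have := Int.emod_lt_of_pos (c i) (hpos i)
    omega
  rw [← natCast_zsmul, Int.toNat_of_nonneg (Int.emod_nonneg _ (hpos i).ne'), mod_addOrderOf_zsmul]

theorem IsBasis.span_eq_top {R : ι → G} (hR : IsBasis R) : span ℤ (Set.range R) = ⊤ := by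
  refine eq_top_iff.mpr fun g _ => ?_
  obtain ⟨b, ⟨-, rfl⟩, -⟩ := hR g
  exact sum_mem fun i _ => nsmul_mem (subset_span (Set.mem_range_self i)) _

theorem IsBasis.prod_addOrderOf {R : ι → G} (hR : IsBasis R) :
    ∏ i, addOrderOf (R i) = Nat.card G := by
  simpa [Nat.card_pi] using
    Nat.card_eq_of_bijective _ ((isBasis_iff_bijective_coeffSum R).mp hR)

theorem isBasis_of_span_eq_top_of_prod_addOrderOf [Finite G] {R : ι → G}
    (hspan : span ℤ (Set.range R) = ⊤) (hcard : ∏ i, addOrderOf (R i) = Nat.card G) :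
    IsBasis R := by
  have hsurj : Surjective (coeffSum R) := fun g =>
    span_subset_range_coeffSum R (by simp [hspan])
  refine (isBasis_iff_bijective_coeffSum R).mpr
    ((Nat.bijective_iff_surjective_and_card _).mpr ⟨hsurj, ?_⟩)
  simpa [Nat.card_pi] using hcard

end CoeffSum

theorem span_range_le_span_range_update {G ι : Type*} [AddCommGroup G] [Fintype ι]
    [DecidableEq ι] {Q : ι → G} {q : ι → ℕ} {k : ι} (hk : (q k).Coprime (addOrderOf (Q k)))
    (Q' : G) (hrep : Q' = ∑ i, q i • Q i) :
    span ℤ (Set.range Q) ≤ span ℤ (Set.range (update Q k Q')) := by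
  set S := span ℤ (Set.range (update Q k Q'))
  have hmem : ∀ i ≠ k, Q i ∈ S := fun i hi =>
    update_of_ne hi Q' Q ▸ subset_span ⟨i, rfl⟩
  have hQk : q k • Q k ∈ S := by
    have hsplit : q k • Q k = Q' - ∑ i ∈ Finset.univ.erase k, q i • Q i := by
      rw [hrep, ← Finset.add_sum_erase _ _ (Finset.mem_univ k), add_sub_cancel_right]
    rw [hsplit]
    refine sub_mem (update_self k Q' Q ▸ subset_span ⟨k, rfl⟩) (sum_mem fun i hi => ?_)
    exact nsmul_mem (hmem i (Finset.ne_of_mem_erase hi)) _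
  refine span_le.mpr (Set.range_subset_iff.mpr fun i => ?_)
  by_cases hi : i = k
  · obtain ⟨m, hm⟩ := exists_nsmul_eq_self_of_coprime hk
    exact hi ▸ hm ▸ nsmul_mem hQk m
  · exact hmem i hi

theorem basis_extension_sufficient_general {G : Type*} [AddCommGroup G] [Fintype G]
    {p : ℕ} (hp : p.Prime)
    {N : ℕ} (Q : Fin N → G) (hQ : IsBasis Q)
    (e : Fin N → ℕ) (hord : ∀ i, addOrderOf (Q i) = p ^ e i)
    (Q' : G) (q : Fin N → ℕ)
    (hrep : Q' = ∑ i, q i • Q i)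
    (k : Fin N) (hk : ¬ p ∣ q k)
    (hordQ' : addOrderOf Q' = p ^ e k) :
    IsBasis (Function.update Q k Q') ∧ ∃ B : Fin N → G, IsBasis B ∧ ∃ i, B i = Q' := by
  have hcop : (q k).Coprime (addOrderOf (Q k)) :=
    hord k ▸ ((Nat.Prime.coprime_iff_not_dvd hp).mpr hk).symm.pow_right _
  have hspan : span ℤ (Set.range (update Q k Q')) = ⊤ :=
    top_unique (hQ.span_eq_top ▸ span_range_le_span_range_update hcop Q' hrep)
  have hordR : ∀ i, addOrderOf (update Q k Q' i) = addOrderOf (Q i) := fun i => by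
    rcases eq_or_ne i k with rfl | hi
    · rw [update_self, hordQ', hord]
    · rw [update_of_ne hi]
  have hR : IsBasis (update Q k Q') :=
    isBasis_of_span_eq_top_of_prod_addOrderOf hspan (by simp only [hordR, hQ.prod_addOrderOf])
  exact ⟨hR, _, hR, k, update_self k Q' Q⟩

/-- Sufficient condition for basis extension: if `Q' = ∑ q i • Q i` is primitive, `k` is the
largest index with `p ∤ q k`, and `|Q'| = p ^ e k = |Q k|`, then replacing `Q k` by `Q'`
again gives a basis of `G`; in particular `Q'` extends to a basis of `G`. -/
theorem basis_extension_sufficient {G : Type*} [AddCommGroup G] [Fintype G]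
    {p : ℕ} (hp : p.Prime) (hG : ∀ g : G, ∃ k : ℕ, p ^ k • g = 0)
    {N : ℕ} (Q : Fin N → G) (hQ : IsBasis Q)
    (e : Fin N → ℕ) (he : Monotone e) (hord : ∀ i, addOrderOf (Q i) = p ^ e i)
    (Q' : G) (q : Fin N → ℕ)
    (hqlt : ∀ i, q i < addOrderOf (Q i)) (hrep : Q' = ∑ i, q i • Q i)
    (k : Fin N) (hk : ¬ p ∣ q k) (hkmax : ∀ i, k < i → p ∣ q i)
    (hordQ' : addOrderOf Q' = p ^ e k) :
    IsBasis (Function.update Q k Q') ∧ ∃ B : Fin N → G, IsBasis B ∧ ∃ i, B i = Q' :=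
  basis_extension_sufficient_general hp Q hQ e hord Q' q hrep k hk hordQ'
end

section
/- In the group G = Z/2 x Z/4 x Z/8, the element Q = (1,0,2) is primitive (its first coordinate is odd) but Q is not a member of any basis of G. -/
/-! Since `2 • (1,0,2) = (0,0,4) = 4 • (0,0,1)`, a basis containing `Q = (1,0,2)` (of order 4)
would represent `2 • Q` in two ways: with coefficient `2` at `Q`, and by multiplying the
coordinates of `(0,0,1)` by `4`, which makes the coefficient at `Q` divisible by `4`. -/

theorem nsmul_sum_eq_sum_mod_addOrderOf_s5 {G : Type*} [AddCommGroup G] {ι : Type*} [Fintype ι]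
    (B : ι → G) (c : ι → ℕ) (n : ℕ) :
    n • ∑ j, c j • B j = ∑ j, (n * c j % addOrderOf (B j)) • B j := by
  rw [Finset.smul_sum]
  refine Finset.sum_congr rfl fun j _ => ?_
  rw [mod_addOrderOf_nsmul, smul_smul]

namespace IsBasis

variable {G : Type*} [AddCommGroup G] {ι : Type*} [Fintype ι] {B : ι → G}

theorem coeff_unique (hB : IsBasis B) {b c : ι → ℕ} (hb : ∀ i, b i < addOrderOf (B i))
    (hc : ∀ i, c i < addOrderOf (B i)) (h : ∑ i, b i • B i = ∑ i, c i • B i) : b = c :=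
  (hB _).unique ⟨hb, rfl⟩ ⟨hc, h⟩

theorem addOrderOf_pos (hB : IsBasis B) (i : ι) : 0 < addOrderOf (B i) :=
  Nat.zero_lt_of_lt ((hB 0).exists.choose_spec.1 i)

theorem nsmul_ne_addOrderOf_nsmul (hB : IsBasis B) (i : ι) {k : ℕ}
    (hk₀ : 0 < k) (hk : k < addOrderOf (B i)) (g : G) :
    k • B i ≠ addOrderOf (B i) • g := by
  classical
  intro h
  obtain ⟨c, -, rfl⟩ := (hB g).exists
  have hsingle : k • B i = ∑ j, (Pi.single i k : ι → ℕ) j • B j := by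
    rw [Finset.sum_eq_single i (fun j _ hj => by simp [hj]) (by simp)]
    simp
  rw [hsingle, nsmul_sum_eq_sum_mod_addOrderOf_s5] at h
  have hcoeff := congrFun (hB.coeff_unique
    (fun j => by rcases eq_or_ne j i with rfl | hj <;> simp [*, hB.addOrderOf_pos j])
    (fun j => Nat.mod_lt _ (hB.addOrderOf_pos j)) h) i
  simp only [Pi.single_eq_same, Nat.mul_mod_right] at hcoeff
  omega

end IsBasis

/-- In `ℤ/2 × ℤ/4 × ℤ/8`, the element `(1,0,2)` is primitive (its first coordinate is odd),
yet it is not a member of any basis. -/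
theorem primitive_not_in_basis :
    IsPrimitive 2 (![(1,0,0),(0,1,0),(0,0,1)] : Fin 3 → ZMod 2 × ZMod 4 × ZMod 8)
      ((1,0,2) : ZMod 2 × ZMod 4 × ZMod 8) ∧
    ¬ ∃ B : Fin 3 → ZMod 2 × ZMod 4 × ZMod 8,
        IsBasis B ∧ ∃ i, B i = ((1,0,2) : ZMod 2 × ZMod 4 × ZMod 8) := by
  have hQ : addOrderOf ((1,0,2) : ZMod 2 × ZMod 4 × ZMod 8) = 4 := by
    have h2 : addOrderOf (2 : ZMod 8) = 4 := ZMod.addOrderOf_coe 2 (by norm_num)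
    norm_num [Prod.addOrderOf, ZMod.addOrderOf_one, h2]
  constructor
  · refine ⟨![1,0,2], fun i => ?_, ?_, 0, by decide⟩
    · fin_cases i <;> simp [Prod.addOrderOf, ZMod.addOrderOf_one]
    · rw [Fin.sum_univ_three]
      decide
  · rintro ⟨B, hB, i, hi⟩
    refine hB.nsmul_ne_addOrderOf_nsmul i (k := 2) two_pos (by rw [hi, hQ]; norm_num)
      ((0,0,1) : ZMod 2 × ZMod 4 × ZMod 8) ?_
    rw [hi, hQ]
    decide
end

section
/- Let G be a finite Abelian p-group with sorted basis {Q_1,...,Q_N} and let K in G with |K| = p^e. If |K| = |m_1 Q_1 + ... + m_N Q_N| and nu_p(p^j K) = nu_p(p^j (m_1 Q_1 + ... + m_N Q_N)) for all 0 <= j < e, then there exists a basis {P_1,...,P_N} of G with |P_i| = |Q_i| such that K = m_1 P_1 + ... + m_N P_N. -/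
/-!
Writing elements in the basis `Q` identifies `G` with `∀ i, ZMod (p ^ e i)`, and the bases with
the same orders as `Q` are exactly the images of `Q` under automorphisms, so it suffices to find
an automorphism of `G` sending `∑ m i • Q i` to `K`. Since `r ≤ ν_p x` exactly when `x ∈ p ^ r • G`,
the hypotheses say that both elements are killed by `p ^ e` and that the heights of their
multiples `p ^ j • _`, `j < e`, agree.

Transvections, scalings by units and swaps of coordinates of equal order bring every element to a
normal form: its nonzero coordinates are powers `p ^ vᵢ`, the valuations `vᵢ` and the order
exponents `eᵢ - vᵢ` increase together, and each one sits at the last index of its order. The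
heights of the multiples `p ^ j • x` recover the pairs `(vᵢ, eᵢ - vᵢ)` of a normal form, hence
the normal form itself, so the two elements have the same normal form.
-/

open Finset

section AddEquivs

variable {A B : Type*} [AddCommGroup A] [AddCommGroup B]

def addEquivOfSqZero (f : A →+ A) (hf : ∀ x, f (f x) = 0) : A ≃+ A where
  toFun x := x + f x
  invFun x := x - f x
  left_inv x := by simp [hf]
  right_inv x := by simp [hf]
  map_add' x y := by simp only [map_add]; abel

lemma exists_addEquiv_of_descent (Inv P : A → Prop) (μ : A → ℕ)
    (step : ∀ x, Inv x → ¬ P x → ∃ ψ : A ≃+ A, Inv (ψ x) ∧ μ (ψ x) < μ x)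
    (x : A) (hx : Inv x) : ∃ ψ : A ≃+ A, Inv (ψ x) ∧ P (ψ x) := by
  induction hμ : μ x using Nat.strong_induction_on generalizing x with
  | _ k ih =>
    by_cases hP : P x
    · exact ⟨AddEquiv.refl A, hx, hP⟩
    obtain ⟨ψ, hψ, hlt⟩ := step x hx hP
    obtain ⟨ψ', hψ'⟩ := ih _ (hμ ▸ hlt) (ψ x) hψ rfl
    exact ⟨ψ.trans ψ', hψ'⟩

lemma AddEquiv.exists_apply_eq_nsmul_iff (φ : A ≃+ B) (a : A) (c : ℕ) :
    (∃ u, φ a = c • u) ↔ ∃ u, a = c • u := by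
  simp only [φ.surjective.exists, ← map_nsmul, φ.injective.eq_iff]

lemma Pi.exists_eq_nsmul_iff {ι : Type*} {M : ι → Type*} [∀ i, AddMonoid (M i)] (z : ∀ i, M i)
    (c : ℕ) : (∃ u, z = c • u) ↔ ∀ i, ∃ v, z i = c • v :=
  ⟨fun ⟨u, hu⟩ i => ⟨u i, congrFun hu i⟩,
    fun h => ⟨fun i => (h i).choose, funext fun i => (h i).choose_spec⟩⟩

/-- `∃ u, p ^ j • x = p ^ r • u` says that `p ^ j • x` has height at least `r`. -/
def HeightsAgree (p e : ℕ) (x y : A) : Prop :=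
  ∀ j < e, ∀ r, (∃ u, p ^ j • x = p ^ r • u) ↔ ∃ u, p ^ j • y = p ^ r • u

lemma HeightsAgree.symm {p e : ℕ} {x y : A} (h : HeightsAgree p e x y) : HeightsAgree p e y x :=
  fun j hj r => (h j hj r).symm

lemma HeightsAgree.map {p e : ℕ} {x y : A} (h : HeightsAgree p e x y) (φ ψ : A ≃+ B) :
    HeightsAgree p e (φ x) (ψ y) := by
  intro j hj r
  rw [← map_nsmul, ← map_nsmul, φ.exists_apply_eq_nsmul_iff, ψ.exists_apply_eq_nsmul_iff]
  exact h j hj r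

end AddEquivs

lemma ENat.natCast_le_sSup_image_iff {S : Set ℕ} (hS : ∀ ⦃a b⦄, a ≤ b → b ∈ S → a ∈ S)
    (h0 : 0 ∈ S) (r : ℕ) : (r : ℕ∞) ≤ sSup ((↑) '' S) ↔ r ∈ S := by
  refine ⟨fun h => ?_, fun h => le_sSup ⟨r, h, rfl⟩⟩
  cases r with
  | zero => exact h0
  | succ k =>
    obtain ⟨_, ⟨a, ha, rfl⟩, hka⟩ := le_sSup_iff_forall_lt.1 h k (by exact_mod_cast k.lt_succ_self)
    exact hS (by exact_mod_cast hka) ha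

lemma card_filter_update_zero_ne_zero_lt {ι : Type*} [Fintype ι] [DecidableEq ι]
    {M : ι → Type*} [∀ i, Zero (M i)] [∀ i, DecidableEq (M i)] {x : ∀ i, M i} {j : ι}
    (hj : x j ≠ 0) :
    (univ.filter fun i => Function.update x j 0 i ≠ 0).card <
      (univ.filter fun i => x i ≠ 0).card := by
  refine Finset.card_lt_card ((Finset.ssubset_iff_of_subset fun k => ?_).2 ⟨j, by simpa, by simp⟩)
  simp only [Finset.mem_filter, Finset.mem_univ, true_and]
  exact fun hk => by rwa [Function.update_of_ne (by rintro rfl; simp at hk)] at hk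

section ZModPow

variable {p E : ℕ}

lemma ZMod.val_nsmul_eq {m : ℕ} [NeZero m] (a : ℕ) (c : ZMod m) : (a • c).val = a * c.val % m := by
  conv_lhs => rw [← ZMod.natCast_zmod_val c, nsmul_eq_mul, ← Nat.cast_mul, ZMod.val_natCast]

def ZMod.valNsmulHom {G : Type*} [AddCommGroup G] {m : ℕ} [NeZero m] (g : G) (hg : m • g = 0) :
    ZMod m →+ G where
  toFun z := z.val • g
  map_zero' := by simp
  map_add' a b := by rw [ZMod.val_add, ← nsmul_eq_mod_nsmul _ hg, add_nsmul]

lemma ZMod.exists_eq_pow_nsmul_iff [NeZero p] (z : ZMod (p ^ E)) (r : ℕ) :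
    (∃ c, z = p ^ r • c) ↔ p ^ r ∣ z.val := by
  refine ⟨?_, fun ⟨t, ht⟩ => ⟨t, by rw [nsmul_eq_mul, ← Nat.cast_mul, ← ht,
    ZMod.natCast_zmod_val]⟩⟩
  rintro ⟨c, rfl⟩
  rcases le_or_gt r E with h | h
  · rw [ZMod.val_nsmul_eq, Nat.dvd_mod_iff (pow_dvd_pow p h)]
    exact dvd_mul_right _ _
  · have : p ^ r • c = 0 := by
      rw [← Nat.add_sub_cancel' h.le, pow_add, mul_nsmul, nsmul_eq_mul (p ^ E),
        ZMod.natCast_self, zero_mul, smul_zero]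
    simp [this]

variable [hp : Fact p.Prime]

lemma ZMod.natCast_pow_eq_zero_iff {s : ℕ} : ((p ^ s : ℕ) : ZMod (p ^ E)) = 0 ↔ E ≤ s := by
  rw [ZMod.natCast_eq_zero_iff, Nat.pow_dvd_pow_iff_le_right hp.out.one_lt]

lemma ZMod.exists_natCast_pow_eq_pow_nsmul_iff (s r : ℕ) :
    (∃ c, ((p ^ s : ℕ) : ZMod (p ^ E)) = p ^ r • c) ↔ (s < E → r ≤ s) := by
  rw [ZMod.exists_eq_pow_nsmul_iff]
  rcases lt_or_ge s E with h | h
  · rw [ZMod.val_natCast_of_lt (Nat.pow_lt_pow_right hp.out.one_lt h),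
      Nat.pow_dvd_pow_iff_le_right hp.out.one_lt]
    exact ⟨fun h' _ => h', fun h' => h' h⟩
  · simp [ZMod.natCast_pow_eq_zero_iff.2 h, h]

lemma ZMod.padicValNat_val_lt {z : ZMod (p ^ E)} (hz : z ≠ 0) : padicValNat p z.val < E := by
  refine (Nat.pow_lt_pow_iff_right hp.out.one_lt).1 ((Nat.le_of_dvd ?_ ?_).trans_lt z.val_lt)
  · exact Nat.pos_of_ne_zero ((ZMod.val_ne_zero z).2 hz)
  · exact pow_padicValNat_dvd

lemma ZMod.padicValNat_val_natCast_pow {s : ℕ} (h : s < E) :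
    padicValNat p ((p ^ s : ℕ) : ZMod (p ^ E)).val = s := by
  rw [ZMod.val_natCast_of_lt (Nat.pow_lt_pow_right hp.out.one_lt h), padicValNat.prime_pow]

lemma ZMod.val_eq_pow_padicValNat_mul {z : ZMod (p ^ E)} (hz : z ≠ 0) :
    ∃ w, ¬ p ∣ w ∧ z.val = p ^ padicValNat p z.val * w := by
  obtain ⟨w, hw⟩ : p ^ padicValNat p z.val ∣ z.val := pow_padicValNat_dvd
  refine ⟨w, fun hpw => pow_succ_padicValNat_not_dvd (p := p) ((ZMod.val_ne_zero z).2 hz) ?_, hw⟩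
  have := mul_dvd_mul_left (p ^ padicValNat p z.val) hpw
  rwa [← hw, ← pow_succ] at this

lemma ZMod.isUnit_natCast_of_not_dvd {w : ℕ} (hw : ¬ p ∣ w) : IsUnit (w : ZMod (p ^ E)) :=
  (ZMod.isUnit_iff_coprime _ _).2 (((Nat.Prime.coprime_iff_not_dvd hp.out).2 hw).symm.pow_right E)

lemma ZMod.exists_unit_mul_eq_pow_padicValNat {z : ZMod (p ^ E)} (hz : z ≠ 0) :
    ∃ u : (ZMod (p ^ E))ˣ, u * z = ((p ^ padicValNat p z.val : ℕ) : ZMod (p ^ E)) := by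
  obtain ⟨w, hw, hz'⟩ := ZMod.val_eq_pow_padicValNat_mul hz
  set v := padicValNat p z.val
  obtain ⟨u, hu⟩ := ZMod.isUnit_natCast_of_not_dvd (E := E) hw
  refine ⟨u⁻¹, ?_⟩
  rw [← ZMod.natCast_zmod_val z, hz', Nat.cast_mul, ← hu, mul_left_comm, Units.inv_mul, mul_one]

lemma ZMod.exists_pow_nsmul_eq_zero_and_nsmul_eq_neg {F a b w w' : ℕ} (hw : ¬ p ∣ w)
    (hab : a ≤ b) (hF : F + a ≤ E + b) :
    ∃ c : ZMod (p ^ F), p ^ E • c = 0 ∧ (p ^ a * w) • c = -((p ^ b * w' : ℕ) : ZMod (p ^ F)) := by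
  obtain ⟨u, hu⟩ := ZMod.isUnit_natCast_of_not_dvd (E := F) hw
  have hpF : (p : ZMod (p ^ F)) ^ (E + (b - a)) = 0 := by
    rw [← Nat.cast_pow, ZMod.natCast_pow_eq_zero_iff]; omega
  refine ⟨-(p ^ (b - a) * w' * ↑u⁻¹), ?_, ?_⟩
  · simp only [nsmul_eq_mul]
    push_cast
    linear_combination (-(w' : ZMod (p ^ F)) * ↑u⁻¹) * hpF
  · simp only [nsmul_eq_mul]
    push_cast
    rw [← Nat.sub_add_cancel hab, pow_add, Nat.add_sub_cancel]
    linear_combination ((p : ZMod (p ^ F)) ^ a * p ^ (b - a) * w' * ↑u⁻¹) * hu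
      - ((p : ZMod (p ^ F)) ^ a * p ^ (b - a) * w') * u.mul_inv

end ZModPow

section Basis

variable {G H : Type*} [AddCommGroup G] [AddCommGroup H] {ι : Type*} [Fintype ι] {Q : ι → G}

lemma IsBasis.map (hQ : IsBasis Q) (φ : G ≃+ H) : IsBasis (fun i => φ (Q i)) := by
  intro g
  simpa only [AddEquiv.addOrderOf_eq, φ.symm_apply_eq, map_sum, map_nsmul] using hQ (φ.symm g)

lemma IsBasis.comp_perm (hQ : IsBasis Q) (σ : Equiv.Perm ι) : IsBasis (fun i => Q (σ i)) := by
  intro g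
  obtain ⟨b, hb, hbu⟩ := hQ g
  refine ⟨b ∘ σ, ?_, fun b' hb' => ?_⟩
  · exact ⟨fun i => hb.1 (σ i), hb.2.trans (Equiv.sum_comp σ fun k => b k • Q k).symm⟩
  · have : b' ∘ σ.symm = b := hbu _ ⟨fun i => by simpa using hb'.1 (σ.symm i),
      hb'.2.trans (by simpa using (Equiv.sum_comp σ.symm fun k => b' k • Q (σ k)).symm)⟩
    rw [← this]; ext i; simp

variable {n : ι → ℕ} [∀ i, NeZero (n i)]

noncomputable def basisEquiv (hQ : IsBasis Q) (hn : ∀ i, addOrderOf (Q i) = n i) :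
    (∀ i, ZMod (n i)) ≃+ G := by
  let f : (∀ i, ZMod (n i)) →+ G := ∑ i, (ZMod.valNsmulHom (Q i)
    (hn i ▸ addOrderOf_nsmul_eq_zero (Q i))).comp (Pi.evalAddMonoidHom _ i)
  have hf (b : ∀ i, ZMod (n i)) :
      (∀ i, (b i).val < addOrderOf (Q i)) ∧ f b = ∑ i, (b i).val • Q i :=
    ⟨fun i => by rw [hn i]; exact ZMod.val_lt (b i), by simp [f, ZMod.valNsmulHom]⟩
  refine AddEquiv.ofBijective f ⟨fun b c hbc => ?_, fun g => ?_⟩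
  · obtain ⟨_, _, hu⟩ := hQ (f b)
    have hval := (hu _ (hf b)).trans (hu _ ⟨(hf c).1, hbc.trans (hf c).2⟩).symm
    exact funext fun i => ZMod.val_injective _ (congrFun hval i)
  · obtain ⟨q, ⟨hq, rfl⟩, -⟩ := hQ g
    refine ⟨fun i => q i, (hf _).2.trans (Finset.sum_congr rfl fun i _ => ?_)⟩
    rw [ZMod.val_natCast_of_lt (hn i ▸ hq i)]

variable (hQ : IsBasis Q) (hn : ∀ i, addOrderOf (Q i) = n i)

lemma basisEquiv_apply (b : ∀ i, ZMod (n i)) :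
    basisEquiv hQ hn b = ∑ i, (b i).val • Q i := by
  simp [basisEquiv, ZMod.valNsmulHom]

include hQ hn in
lemma basisEquiv_symm_apply_val {x : G} {q : ι → ℕ} (hq : ∀ i, q i < addOrderOf (Q i))
    (hx : x = ∑ i, q i • Q i) (i : ι) : ((basisEquiv hQ hn).symm x i).val = q i := by
  obtain ⟨_, _, hu⟩ := hQ x
  refine congrFun ((hu (fun i => ((basisEquiv hQ hn).symm x i).val) ⟨fun i => ?_, ?_⟩).trans
    (hu q ⟨hq, hx⟩).symm) i
  · rw [hn i]; exact ZMod.val_lt _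
  · rw [← basisEquiv_apply hQ hn, AddEquiv.apply_symm_apply]

end Basis

section Valuation

variable {G : Type*} [AddCommGroup G] {ι : Type*} [Fintype ι] {Q : ι → G}
  {p : ℕ} [NeZero p] {e : ι → ℕ} (hQ : IsBasis Q) (he : ∀ i, addOrderOf (Q i) = p ^ e i)
include hQ he

lemma le_nuP_iff (x : G) (r : ℕ) : (r : ℕ∞) ≤ nuP p Q x ↔ ∃ u, x = p ^ r • u := by
  set b := (basisEquiv hQ he).symm x
  have hS : {r : ℕ | ∀ q : ι → ℕ, ((∀ i, q i < addOrderOf (Q i)) ∧ x = ∑ i, q i • Q i) →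
      ∀ i, p ^ r ∣ q i} = {r | ∀ i, p ^ r ∣ (b i).val} := by
    ext r
    refine ⟨fun h => h _ ⟨fun i => ?_, ?_⟩, fun h q hq i => ?_⟩
    · rw [he i]; exact ZMod.val_lt _
    · rw [← basisEquiv_apply hQ he, AddEquiv.apply_symm_apply]
    · rw [← basisEquiv_symm_apply_val hQ he hq.1 hq.2 i]; exact h i
  rw [nuP, hS, ENat.natCast_le_sSup_image_iff (S := {r | ∀ i, p ^ r ∣ (b i).val})
    (fun s t hst ht i => (pow_dvd_pow p hst).trans (ht i)) (fun i => by simp),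
    ← (basisEquiv hQ he).symm.exists_apply_eq_nsmul_iff, Pi.exists_eq_nsmul_iff]
  simp only [Set.mem_ofPred_eq, ZMod.exists_eq_pow_nsmul_iff, b]

lemma heightsAgree_of_nuP_eq {E : ℕ} {x y : G}
    (h : ∀ j < E, nuP p Q (p ^ j • x) = nuP p Q (p ^ j • y)) : HeightsAgree p E x y :=
  fun j hj r => by rw [← le_nuP_iff hQ he, ← le_nuP_iff hQ he, h j hj]

end Valuation

section Coordinates

variable {ι : Type*} [DecidableEq ι] {n : ι → ℕ}

lemma addOrderOf_piSingle_one (i : ι) :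
    addOrderOf (Pi.single i (1 : ZMod (n i)) : ∀ k, ZMod (n k)) = n i := by
  rw [← AddMonoidHom.single_apply,
    addOrderOf_injective _ (Pi.single_injective (M := fun k => ZMod (n k)) i), ZMod.addOrderOf_one]

lemma sum_nsmul_piSingle_one [Fintype ι] (b : ι → ℕ) :
    ∑ i, b i • (Pi.single i (1 : ZMod (n i)) : ∀ k, ZMod (n k)) = fun k => (b k : ZMod (n k)) := by
  simp_rw [← Pi.single_nsmul, nsmul_eq_mul, mul_one]
  exact Finset.univ_sum_single fun k => (b k : ZMod (n k))

variable [∀ i, NeZero (n i)]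

noncomputable def shearCoords {i j : ι} (hij : i ≠ j) (c : ZMod (n i)) (hc : n j • c = 0) :
    (∀ i, ZMod (n i)) ≃+ (∀ i, ZMod (n i)) :=
  addEquivOfSqZero ((AddMonoidHom.single _ i).comp ((ZMod.valNsmulHom c hc).comp
    (Pi.evalAddMonoidHom _ j))) fun x => by simp [hij.symm]

lemma shearCoords_apply {i j : ι} (hij : i ≠ j) (c : ZMod (n i)) (hc : n j • c = 0)
    (x : ∀ i, ZMod (n i)) : shearCoords hij c hc x = x + Pi.single i ((x j).val • c) := rfl

variable [Fintype ι]

lemma isBasis_piSingle : IsBasis fun i => (Pi.single i (1 : ZMod (n i)) : ∀ k, ZMod (n k)) := by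
  intro x
  refine ⟨fun i => (x i).val, ⟨fun i => ?_, ?_⟩, fun b ⟨hb, hx⟩ => funext fun i => ?_⟩
  · rw [addOrderOf_piSingle_one]; exact ZMod.val_lt _
  · simp only [sum_nsmul_piSingle_one, ZMod.natCast_zmod_val]
  · rw [sum_nsmul_piSingle_one] at hx
    rw [hx, ZMod.val_natCast_of_lt (addOrderOf_piSingle_one (n := n) i ▸ hb i)]

noncomputable def permCoords (σ : Equiv.Perm ι) (hσ : ∀ i, n (σ i) = n i) :
    (∀ i, ZMod (n i)) ≃+ (∀ i, ZMod (n i)) :=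
  basisEquiv (isBasis_piSingle.comp_perm σ) fun i => by rw [addOrderOf_piSingle_one, hσ]

lemma permCoords_apply_apply (σ : Equiv.Perm ι) (hσ : ∀ i, n (σ i) = n i)
    (x : ∀ i, ZMod (n i)) (i : ι) : permCoords σ hσ x (σ i) = ((x i).val : ZMod (n (σ i))) := by
  rw [permCoords, basisEquiv_apply, Finset.sum_apply, Finset.sum_eq_single i (fun k _ hki => by
    rw [Pi.smul_apply, Pi.single_eq_of_ne (σ.injective.ne hki).symm, smul_zero]) (by simp),
    Pi.smul_apply, Pi.single_eq_same, nsmul_eq_mul, mul_one]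

lemma val_permCoords_apply_apply (σ : Equiv.Perm ι) (hσ : ∀ i, n (σ i) = n i)
    (x : ∀ i, ZMod (n i)) (i : ι) : (permCoords σ hσ x (σ i)).val = (x i).val := by
  rw [permCoords_apply_apply, ZMod.val_natCast_of_lt ((x i).val_lt.trans_eq (hσ i).symm)]

end Coordinates

section NormalForm

variable {p : ℕ} {ι : Type*} {e : ι → ℕ}

def coordVal (p : ℕ) (x : ∀ i, ZMod (p ^ e i)) (i : ι) : ℕ := padicValNat p (x i).val

/-- For `x i ≠ 0`, the order of `x i` is `p ^ (e i - coordVal p x i)`; the condition says that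
a less divisible coordinate has strictly smaller order, so that no coordinate can be cleared by a
transvection from another one. -/
def IsAbsorptionFree (p : ℕ) (x : ∀ i, ZMod (p ^ e i)) : Prop :=
  ∀ i j, x i ≠ 0 → x j ≠ 0 → i ≠ j → coordVal p x i ≤ coordVal p x j →
    e i + coordVal p x j < e j + coordVal p x i

def IsPurePowers (p : ℕ) (x : ∀ i, ZMod (p ^ e i)) : Prop :=
  ∀ i, x i ≠ 0 → (x i).val = p ^ coordVal p x i

def IsPlaced [LE ι] (x : ∀ i, ZMod (p ^ e i)) : Prop :=
  ∀ i, x i ≠ 0 → ∀ j, e j = e i → j ≤ i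

structure IsNormalForm [LE ι] (p : ℕ) (x : ∀ i, ZMod (p ^ e i)) : Prop where
  absorptionFree : IsAbsorptionFree p x
  purePowers : IsPurePowers p x
  placed : IsPlaced x

lemma IsAbsorptionFree.eq_of_e_eq {x : ∀ i, ZMod (p ^ e i)} (hx : IsAbsorptionFree p x)
    {i j : ι} (hi : x i ≠ 0) (hj : x j ≠ 0) (he : e i = e j) : i = j := by
  by_contra hij
  rcases le_total (coordVal p x i) (coordVal p x j) with h | h
  · have := hx i j hi hj hij h; omega
  · have := hx j i hj hi (Ne.symm hij) h; omega

lemma IsAbsorptionFree.of_perm {x y : ∀ i, ZMod (p ^ e i)} (hx : IsAbsorptionFree p x)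
    (σ : Equiv.Perm ι) (hσ : ∀ k, e (σ k) = e k) (h0 : ∀ k, y (σ k) = 0 ↔ x k = 0)
    (hv : ∀ k, coordVal p y (σ k) = coordVal p x k) : IsAbsorptionFree p y := by
  intro i j hi hj hij hle
  obtain ⟨i, rfl⟩ := σ.surjective i
  obtain ⟨j, rfl⟩ := σ.surjective j
  rw [hv, hv] at hle ⊢
  rw [hσ, hσ]
  exact hx i j ((h0 i).not.1 hi) ((h0 j).not.1 hj) (hij <| congrArg σ ·) hle

/-- The conclusion says that `p ^ j • x` has height at least `r` (see
`IsPurePowers.exists_pow_nsmul_eq_pow_nsmul_iff`); from the level `e k - coordVal p x k - 1` on,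
the bounds for the coordinate `x k` alone imply it. -/
lemma IsAbsorptionFree.forall_le_add_coordVal {x : ∀ i, ZMod (p ^ e i)}
    (hx : IsAbsorptionFree p x) {k : ι} (hk : x k ≠ 0) {j r : ℕ}
    (hj : e k ≤ j + 1 + coordVal p x k) (hr : r ≤ j + coordVal p x k + 1)
    (hr' : j + coordVal p x k < e k → r ≤ j + coordVal p x k) :
    ∀ i, x i ≠ 0 → j + coordVal p x i < e i → r ≤ j + coordVal p x i := by
  intro i hi hji
  rcases eq_or_ne i k with rfl | hik
  · omega
  · by_contra hlt
    have := hx i k hi hk hik (by omega)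
    omega

lemma coordVal_lt [Fact p.Prime] {x : ∀ i, ZMod (p ^ e i)} {i : ι} (hx : x i ≠ 0) :
    coordVal p x i < e i :=
  ZMod.padicValNat_val_lt hx

end NormalForm

section Reduction

variable {p : ℕ} [hp : Fact p.Prime] {ι : Type*} {e : ι → ℕ}

lemma exists_addEquiv_apply_eq_update_zero [DecidableEq ι] {x : ∀ i, ZMod (p ^ e i)} {i j : ι}
    (hij : i ≠ j) (hi : x i ≠ 0) (hv : coordVal p x i ≤ coordVal p x j)
    (he : e j + coordVal p x i ≤ e i + coordVal p x j) :
    ∃ ψ : (∀ i, ZMod (p ^ e i)) ≃+ (∀ i, ZMod (p ^ e i)), ψ x = Function.update x j 0 := by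
  obtain ⟨w, hw, hxi⟩ := ZMod.val_eq_pow_padicValNat_mul hi
  obtain ⟨w', hxj⟩ : p ^ coordVal p x j ∣ (x j).val := pow_padicValNat_dvd
  obtain ⟨c, hc, hxc⟩ := ZMod.exists_pow_nsmul_eq_zero_and_nsmul_eq_neg (w' := w') hw hv he
  simp only [coordVal] at hxj hxc
  rw [← hxi, ← hxj, ZMod.natCast_zmod_val] at hxc
  refine ⟨shearCoords hij.symm c hc, funext fun k => ?_⟩
  rcases eq_or_ne k j with rfl | hk
  · simp [shearCoords_apply, hxc]
  · simp [shearCoords_apply, hk]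

lemma exists_addEquiv_isAbsorptionFree [Fintype ι] [DecidableEq ι] (x : ∀ i, ZMod (p ^ e i)) :
    ∃ ψ : (∀ i, ZMod (p ^ e i)) ≃+ (∀ i, ZMod (p ^ e i)), IsAbsorptionFree p (ψ x) := by
  refine (exists_addEquiv_of_descent (fun _ => True) (IsAbsorptionFree p)
    (fun x => (univ.filter fun i => x i ≠ 0).card) (fun x _ hx => ?_) x trivial).imp
    fun _ h => h.2
  simp only [IsAbsorptionFree, not_forall, not_lt] at hx
  obtain ⟨i, j, hi, hj, hij, hv, he⟩ := hx
  obtain ⟨ψ, hψ⟩ := exists_addEquiv_apply_eq_update_zero hij hi hv he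
  exact ⟨ψ, trivial, hψ ▸ card_filter_update_zero_ne_zero_lt hj⟩

lemma exists_addEquiv_isPurePowers {x : ∀ i, ZMod (p ^ e i)} (hx : IsAbsorptionFree p x) :
    ∃ ψ : (∀ i, ZMod (p ^ e i)) ≃+ (∀ i, ZMod (p ^ e i)),
      IsAbsorptionFree p (ψ x) ∧ IsPurePowers p (ψ x) := by
  have (k : ι) : ∃ u : (ZMod (p ^ e k))ˣ,
      x k ≠ 0 → (u : ZMod (p ^ e k)) * x k = ((p ^ coordVal p x k : ℕ) : ZMod (p ^ e k)) :=
    if hk : x k = 0 then ⟨1, (absurd hk ·)⟩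
    else (ZMod.exists_unit_mul_eq_pow_padicValNat hk).imp fun _ h _ => h
  choose d hd using this
  let ψ := AddEquiv.piCongrRight fun k => DistribMulAction.toAddEquiv (ZMod (p ^ e k)) (d k)
  have hψ (k : ι) : ψ x k = d k * x k := rfl
  have h0 (k : ι) : ψ x k = 0 ↔ x k = 0 := by rw [hψ, Units.mul_right_eq_zero]
  have hv (k : ι) : coordVal p (ψ x) k = coordVal p x k := by
    by_cases hk : x k = 0
    · simp [coordVal, hψ, hk]
    · rw [coordVal, hψ, hd k hk, ZMod.padicValNat_val_natCast_pow (coordVal_lt hk)]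
  refine ⟨ψ, hx.of_perm (Equiv.refl ι) (fun _ => rfl) h0 hv, fun k hk => ?_⟩
  rw [hv, hψ, hd k ((h0 k).not.1 hk), ZMod.val_natCast_of_lt
    (Nat.pow_lt_pow_right hp.out.one_lt (coordVal_lt ((h0 k).not.1 hk)))]

lemma exists_addEquiv_of_perm [Fintype ι] [DecidableEq ι] {x : ∀ i, ZMod (p ^ e i)}
    (hx : IsAbsorptionFree p x) (hx' : IsPurePowers p x) (σ : Equiv.Perm ι)
    (hσ : ∀ k, e (σ k) = e k) :
    ∃ ψ : (∀ i, ZMod (p ^ e i)) ≃+ (∀ i, ZMod (p ^ e i)),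
      (IsAbsorptionFree p (ψ x) ∧ IsPurePowers p (ψ x)) ∧ ∀ k, ψ x (σ k) = 0 ↔ x k = 0 := by
  set ψ := permCoords σ (n := fun k => p ^ e k) fun k => by rw [hσ]
  have hval (k : ι) : (ψ x (σ k)).val = (x k).val := val_permCoords_apply_apply _ _ x k
  have h0 (k : ι) : ψ x (σ k) = 0 ↔ x k = 0 := by rw [← ZMod.val_eq_zero, hval, ZMod.val_eq_zero]
  have hv (k : ι) : coordVal p (ψ x) (σ k) = coordVal p x k := by rw [coordVal, hval, coordVal]
  refine ⟨ψ, ⟨hx.of_perm σ hσ h0 hv, fun k hk => ?_⟩, h0⟩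
  obtain ⟨k, rfl⟩ := σ.surjective k
  rw [hval, hv, hx' k ((h0 k).not.1 hk)]

lemma exists_addEquiv_isPlaced [Fintype ι] [LinearOrder ι] {x : ∀ i, ZMod (p ^ e i)}
    (hx : IsAbsorptionFree p x) (hx' : IsPurePowers p x) :
    ∃ ψ : (∀ i, ZMod (p ^ e i)) ≃+ (∀ i, ZMod (p ^ e i)),
      (IsAbsorptionFree p (ψ x) ∧ IsPurePowers p (ψ x)) ∧ IsPlaced (ψ x) := by
  refine exists_addEquiv_of_descent (fun x => IsAbsorptionFree p x ∧ IsPurePowers p x) IsPlaced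
    (fun x => (univ.filter fun i => x i ≠ 0 ∧ ∃ j, e j = e i ∧ i < j).card)
    (fun x ⟨hx, hx'⟩ hplaced => ?_) x ⟨hx, hx'⟩
  simp only [IsPlaced, not_forall, not_le] at hplaced
  obtain ⟨i, hi, j₀, hej₀, hij₀⟩ := hplaced
  -- swap `x i` into the last index `m` of the same order, where `x` vanishes
  obtain ⟨m, ⟨hem, him⟩, hmax⟩ : ∃ m, (e m = e i ∧ i < m) ∧ ∀ j, e j = e i → j ≤ m := by
    obtain ⟨m, hm, hmax⟩ := (univ.filter fun j => e j = e i).exists_max_image id ⟨i, by simp⟩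
    simp only [Finset.mem_filter, Finset.mem_univ, true_and, id] at hm hmax
    exact ⟨m, ⟨hm, hij₀.trans_le (hmax j₀ hej₀)⟩, hmax⟩
  have hxm : x m = 0 := by_contra fun h => him.ne (hx.eq_of_e_eq hi h hem.symm)
  obtain ⟨ψ, hψ, h0⟩ := exists_addEquiv_of_perm hx hx' (Equiv.swap i m)
    (Equiv.apply_swap_eq_self hem.symm)
  have hψi : ψ x i = 0 := by rw [← Equiv.swap_apply_right i m]; exact (h0 m).2 hxm
  refine ⟨ψ, hψ, Finset.card_lt_card ((Finset.ssubset_iff_of_subset fun k => ?_).2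
    ⟨i, by simpa using ⟨hi, j₀, hej₀, hij₀⟩, by simp [hψi]⟩)⟩
  simp only [Finset.mem_filter, Finset.mem_univ, true_and]
  rintro ⟨hk, j, hej, hkj⟩
  have hkm : k ≠ m := by rintro rfl; exact not_lt_of_ge (hmax j (hej.trans hem)) hkj
  have hki : k ≠ i := by rintro rfl; exact hk hψi
  rw [← Equiv.swap_apply_of_ne_of_ne hki hkm, Ne, h0] at hk
  exact ⟨hk, j, hej, hkj⟩

lemma exists_addEquiv_isNormalForm [Fintype ι] [LinearOrder ι] (x : ∀ i, ZMod (p ^ e i)) :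
    ∃ ψ : (∀ i, ZMod (p ^ e i)) ≃+ (∀ i, ZMod (p ^ e i)), IsNormalForm p (ψ x) := by
  obtain ⟨ψ₁, h₁⟩ := exists_addEquiv_isAbsorptionFree x
  obtain ⟨ψ₂, h₂, h₂'⟩ := exists_addEquiv_isPurePowers h₁
  obtain ⟨ψ₃, ⟨h₃, h₃'⟩, h₃''⟩ := exists_addEquiv_isPlaced h₂ h₂'
  exact ⟨ψ₁.trans (ψ₂.trans ψ₃), h₃, h₃', h₃''⟩

end Reduction

section Uniqueness

variable {p : ℕ} [hp : Fact p.Prime] {ι : Type*} {e : ι → ℕ}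

lemma IsPurePowers.exists_pow_nsmul_eq_pow_nsmul_iff {x : ∀ i, ZMod (p ^ e i)}
    (hx : IsPurePowers p x) (j r : ℕ) :
    (∃ u, p ^ j • x = p ^ r • u) ↔
      ∀ i, x i ≠ 0 → j + coordVal p x i < e i → r ≤ j + coordVal p x i := by
  rw [Pi.exists_eq_nsmul_iff]
  refine forall_congr' fun i => ?_
  by_cases hi : x i = 0
  · exact iff_of_true ⟨0, by simp [hi]⟩ fun h => (h hi).elim
  · have hxi : p ^ j • x i = ((p ^ (j + coordVal p x i) : ℕ) : ZMod (p ^ e i)) := by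
      conv_lhs => rw [← ZMod.natCast_zmod_val (x i), hx i hi]
      rw [nsmul_eq_mul, ← Nat.cast_mul, ← pow_add]
    rw [Pi.smul_apply, hxi, ZMod.exists_natCast_pow_eq_pow_nsmul_iff]
    exact ⟨fun h _ => h, fun h => h hi⟩

lemma IsPurePowers.le_add_coordVal {x : ∀ i, ZMod (p ^ e i)} (hx : IsPurePowers p x) {E : ℕ}
    (hE : p ^ E • x = 0) {i : ι} (hi : x i ≠ 0) : e i ≤ E + coordVal p x i := by
  by_contra! h
  have := (hx.exists_pow_nsmul_eq_pow_nsmul_iff E (E + coordVal p x i + 1)).1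
    ⟨0, by rw [hE, smul_zero]⟩ i hi h
  omega

lemma exists_coordVal_eq_and_e_eq {x y : ∀ i, ZMod (p ^ e i)} {E : ℕ} (hx : IsAbsorptionFree p x)
    (hxp : IsPurePowers p x) (hyp : IsPurePowers p y) (hxE : p ^ E • x = 0) (hyE : p ^ E • y = 0)
    (hxy : HeightsAgree p E x y) {k : ι} (hk : x k ≠ 0) :
    ∃ k', y k' ≠ 0 ∧ coordVal p y k' = coordVal p x k ∧ e k' = e k := by
  have hD (j : ℕ) (hj : j < E) (r : ℕ) :
      (∀ i, x i ≠ 0 → j + coordVal p x i < e i → r ≤ j + coordVal p x i) ↔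
        ∀ i, y i ≠ 0 → j + coordVal p y i < e i → r ≤ j + coordVal p y i := by
    rw [← hxp.exists_pow_nsmul_eq_pow_nsmul_iff, ← hyp.exists_pow_nsmul_eq_pow_nsmul_iff]
    exact hxy j hj r
  have hvk := coordVal_lt hk
  have hek := hxp.le_add_coordVal hxE hk
  obtain ⟨k', hk', hjk', hlt⟩ : ∃ k', y k' ≠ 0 ∧
      e k - coordVal p x k - 1 + coordVal p y k' < e k' ∧ coordVal p y k' ≤ coordVal p x k := by
    by_contra! hno
    have := (hD (e k - coordVal p x k - 1) (by omega) (e k)).2 (fun i hi hji => ?_) k hk (by omega)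
    · omega
    · have := hno i hi hji
      omega
  have hge := (hD (e k - coordVal p x k - 1) (by omega) (e k - 1)).1
    (hx.forall_le_add_coordVal hk (by omega) (by omega) fun _ => by omega) k' hk' (by omega)
  refine ⟨k', hk', by omega, ?_⟩
  by_contra hne
  have hek' := hyp.le_add_coordVal hyE hk'
  have := (hD (e k - coordVal p x k) (by omega) (e k + 1)).1
    (hx.forall_le_add_coordVal hk (by omega) (by omega) fun _ => by omega) k' hk' (by omega)
  omega

variable [LinearOrder ι]

lemma IsNormalForm.apply_eq_of_heightsAgree {x y : ∀ i, ZMod (p ^ e i)} {E : ℕ}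
    (hx : IsNormalForm p x) (hy : IsNormalForm p y) (hxE : p ^ E • x = 0) (hyE : p ^ E • y = 0)
    (hxy : HeightsAgree p E x y) {k : ι} (hk : x k ≠ 0) : y k = x k := by
  obtain ⟨k', hk', hv, he⟩ :=
    exists_coordVal_eq_and_e_eq hx.absorptionFree hx.purePowers hy.purePowers hxE hyE hxy hk
  obtain rfl : k' = k := le_antisymm (hx.placed k hk k' he) (hy.placed k' hk' k he.symm)
  rw [← ZMod.natCast_zmod_val (y k'), hy.purePowers k' hk', hv, ← hx.purePowers k' hk,
    ZMod.natCast_zmod_val]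

lemma IsNormalForm.eq_of_heightsAgree {x y : ∀ i, ZMod (p ^ e i)} {E : ℕ}
    (hx : IsNormalForm p x) (hy : IsNormalForm p y) (hxE : p ^ E • x = 0) (hyE : p ^ E • y = 0)
    (hxy : HeightsAgree p E x y) : x = y := by
  funext k
  by_cases hxk : x k = 0
  · by_cases hyk : y k = 0
    · rw [hxk, hyk]
    · exact hy.apply_eq_of_heightsAgree hx hyE hxE hxy.symm hyk
  · exact (hx.apply_eq_of_heightsAgree hy hxE hyE hxy hxk).symm

theorem exists_addEquiv_apply_eq_of_heightsAgree [Fintype ι] {x y : ∀ i, ZMod (p ^ e i)} {E : ℕ}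
    (hxE : p ^ E • x = 0) (hyE : p ^ E • y = 0) (hxy : HeightsAgree p E x y) :
    ∃ φ : (∀ i, ZMod (p ^ e i)) ≃+ (∀ i, ZMod (p ^ e i)), φ y = x := by
  obtain ⟨ψ, hψ⟩ := exists_addEquiv_isNormalForm (p := p) x
  obtain ⟨χ, hχ⟩ := exists_addEquiv_isNormalForm (p := p) y
  have hψχ := hψ.eq_of_heightsAgree hχ (by rw [← map_nsmul, hxE, map_zero])
    (by rw [← map_nsmul, hyE, map_zero]) (hxy.map ψ χ)
  exact ⟨χ.trans ψ.symm, by rw [AddEquiv.trans_apply, ← hψχ, AddEquiv.symm_apply_apply]⟩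

end Uniqueness

theorem existence_sufficient_general {G : Type*} [AddCommGroup G]
    {p : ℕ} (hp : p.Prime) (hG : ∀ g : G, ∃ k : ℕ, p ^ k • g = 0)
    {N : ℕ} (Q : Fin N → G) (hQ : IsBasis Q)
    (K : G) (e : ℕ) (hordK : addOrderOf K = p ^ e)
    (m : Fin N → ℕ)
    (h1 : addOrderOf K = addOrderOf (∑ i, m i • Q i))
    (h2 : ∀ j : ℕ, j < e → nuP p Q (p ^ j • K) = nuP p Q (p ^ j • ∑ i, m i • Q i)) :
    ∃ P : Fin N → G, IsBasis P ∧ (∀ i, addOrderOf (P i) = addOrderOf (Q i)) ∧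
      K = ∑ i, m i • P i := by
  have := Fact.mk hp
  have hpow (i : Fin N) : ∃ E, addOrderOf (Q i) = p ^ E := by
    obtain ⟨k, hk⟩ := hG (Q i)
    obtain ⟨E, -, hE⟩ := (Nat.dvd_prime_pow hp).1 (addOrderOf_dvd_of_nsmul_eq_zero hk)
    exact ⟨E, hE⟩
  choose E hE using hpow
  let b := basisEquiv hQ hE
  obtain ⟨φ, hφ⟩ := exists_addEquiv_apply_eq_of_heightsAgree
    (x := b.symm K) (y := b.symm (∑ i, m i • Q i))
    (by rw [← map_nsmul, ← hordK, addOrderOf_nsmul_eq_zero, map_zero])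
    (by rw [← map_nsmul, ← hordK, h1, addOrderOf_nsmul_eq_zero, map_zero])
    ((heightsAgree_of_nuP_eq hQ hE h2).map b.symm b.symm)
  let Φ := b.symm.trans (φ.trans b)
  have hΦ : Φ (∑ i, m i • Q i) = K := by
    rw [AddEquiv.trans_apply, AddEquiv.trans_apply, hφ, AddEquiv.apply_symm_apply]
  refine ⟨fun i => Φ (Q i), hQ.map Φ, fun i => Φ.addOrderOf_eq _, ?_⟩
  rw [← hΦ, map_sum]
  simp_rw [map_nsmul]

/-- Existence theorem, sufficiency: if `|K| = |∑ m i • Q i|` and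
`ν_p (p^j • K) = ν_p (p^j • ∑ m i • Q i)` for all `0 ≤ j < e` (where `|K| = p ^ e`),
then there is a basis `P` with `|P i| = |Q i|` and `K = ∑ m i • P i`. -/
theorem existence_sufficient {G : Type*} [AddCommGroup G] [Fintype G]
    {p : ℕ} (hp : p.Prime) (hG : ∀ g : G, ∃ k : ℕ, p ^ k • g = 0)
    {N : ℕ} (Q : Fin N → G) (hQ : IsBasis Q)
    (hQsorted : Monotone fun i => addOrderOf (Q i))
    (K : G) (e : ℕ) (hordK : addOrderOf K = p ^ e)
    (m : Fin N → ℕ) (hm : ∀ i, m i < addOrderOf (Q i))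
    (h1 : addOrderOf K = addOrderOf (∑ i, m i • Q i))
    (h2 : ∀ j : ℕ, j < e → nuP p Q (p ^ j • K) = nuP p Q (p ^ j • ∑ i, m i • Q i)) :
    ∃ P : Fin N → G, IsBasis P ∧ (∀ i, addOrderOf (P i) = addOrderOf (Q i)) ∧
      K = ∑ i, m i • P i :=
  existence_sufficient_general hp hG Q hQ K e hordK m h1 h2
end

section
/- Let G be a finite Abelian p-group with sorted basis {Q_1,...,Q_N}, and consider a root extraction problem with data K in G and multipliers m_1,...,m_N, with r = nu_p(K) and nu_p(K) = nu_p(sum m_i Q_i). Write K = p^r K' and m_i = p^r m_i' (choosing K' with coefficients q_i' such that q_i = p^r q_i' and q_i' = 0 whenever q_i = 0, and m_i' = 0 whenever m_i = 0). Then there exists a basis {P_i} with K = sum m_i P_i if and only if there exists a basis {P_i'} with K' = sum m_i' P_i'. -/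
/-!
Only the forward direction has content. Given a basis `P` with `K = ∑ mᵢ Pᵢ`, the defect
`D = K' - ∑ m'ᵢ Pᵢ` is killed by `p ^ r`. Since `ν_p` of `∑ mᵢ Qᵢ` is exactly `r`, some `m j` is not
divisible by `p ^ (r + 1)`; then `r < e`, where `|P j| = p ^ e`, and `m' j` is a unit modulo `p ^ e`.
Replacing `P j` by `P j + u • D`, with `u` inverse to `m' j`, absorbs the defect. As `p ^ r • D = 0`
and `r < e`, the new vector has the same order and `D` has a `j`-th coordinate divisible by `p`, so the
change of coordinates is unitriangular up to the unit `1 + u dⱼ` and the new family is again a basis.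
-/

theorem addOrderOf_add_eq_left_of_pow_nsmul_eq_zero {G : Type*} [AddCommMonoid G] {p r e : ℕ}
    (hp : p.Prime) {x y : G} (hx : addOrderOf x = p ^ e) (hy : p ^ r • y = 0) (hre : r < e) :
    addOrderOf (x + y) = addOrderOf x := by
  have hyr : addOrderOf y ∣ p ^ r := addOrderOf_dvd_of_nsmul_eq_zero hy
  refine (AddCommute.all x y).addOrderOf_add_eq_left_of_forall_prime_mul_dvd
    (addOrderOf_pos_iff.mp (hx ▸ pow_pos hp.pos e)) fun ℓ hℓ hℓy => ?_
  obtain rfl : ℓ = p := (Nat.prime_dvd_prime_iff_eq hℓ hp).mp (hℓ.dvd_of_dvd_pow (hℓy.trans hyr))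
  rw [hx]
  exact (mul_dvd_mul_left ℓ hyr).trans (by rw [← pow_succ']; exact pow_dvd_pow ℓ hre)

theorem lt_and_not_dvd_of_pow_mul_modEq {p r e a m : ℕ} (h : p ^ r * a ≡ m [MOD p ^ e])
    (hm : m < p ^ e) (hmr : ¬ p ^ (r + 1) ∣ m) : r < e ∧ ¬ p ∣ a := by
  have hre : r < e := by
    by_contra! her
    have hm0 : m = 0 :=
      Nat.eq_zero_of_dvd_of_lt ((h.dvd_iff dvd_rfl).mp (dvd_mul_of_dvd_left (pow_dvd_pow p her) a)) hm
    exact hmr (hm0 ▸ dvd_zero _)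
  refine ⟨hre, fun ⟨b, hb⟩ => hmr ((h.dvd_iff (pow_dvd_pow p hre)).mp ⟨b, ?_⟩)⟩
  rw [hb, pow_succ, mul_assoc]

section Basis

variable {G : Type*} [AddCommGroup G] {ι : Type*} {P : ι → G}

theorem addOrderOf_update_add [DecidableEq ι] {j : ι} {x : G}
    (hord : addOrderOf (P j + x) = addOrderOf (P j)) (i : ι) :
    addOrderOf (Function.update P j (P j + x) i) = addOrderOf (P i) := by
  rcases eq_or_ne i j with rfl | h
  · simpa using hord
  · simp [h]

variable [Fintype ι]

theorem nsmul_sum_nsmul_of_modEq (P : ι → G) {k : ℕ} {a b : ι → ℕ}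
    (h : ∀ i, k * a i ≡ b i [MOD addOrderOf (P i)]) :
    k • ∑ i, a i • P i = ∑ i, b i • P i := by
  rw [Finset.smul_sum]
  exact Finset.sum_congr rfl fun i _ => by rw [smul_smul]; exact nsmul_eq_nsmul_iff_modEq.mpr (h i)

theorem sum_nsmul_update_add [DecidableEq ι] (P : ι → G) (j : ι) (x : G) (b : ι → ℕ) :
    ∑ i, b i • Function.update P j (P j + x) i = ∑ i, b i • P i + b j • x := by
  have hP : Function.update P j (P j + x) = P + Pi.single j x := by
    ext i
    rcases eq_or_ne i j with rfl | h
    · simp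
    · simp [h]
  simp [hP, smul_add, Finset.sum_add_distrib, Pi.single_apply]

theorem IsBasis.addOrderOf_pos_s13 (hP : IsBasis P) (i : ι) : 0 < addOrderOf (P i) :=
  (Nat.zero_le _).trans_lt ((hP 0).exists.choose_spec.1 i)

theorem IsBasis.modEq_of_sum_eq (hP : IsBasis P) {a b : ι → ℕ}
    (h : ∑ i, a i • P i = ∑ i, b i • P i) (i : ι) : a i ≡ b i [MOD addOrderOf (P i)] := by
  have reduce : ∀ c : ι → ℕ, ∑ i, c i • P i = ∑ i, (c i % addOrderOf (P i)) • P i := fun c =>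
    Finset.sum_congr rfl fun i _ => nsmul_eq_nsmul_iff_modEq.mpr (Nat.mod_modEq _ _).symm
  have hlt : ∀ c : ι → ℕ, ∀ i, c i % addOrderOf (P i) < addOrderOf (P i) := fun c i =>
    Nat.mod_lt _ (hP.addOrderOf_pos_s13 i)
  exact congrFun ((hP _).unique ⟨hlt a, reduce a⟩ ⟨hlt b, h.trans (reduce b)⟩) i

theorem IsBasis.prime_dvd_of_pow_nsmul_sum_eq_zero (hP : IsBasis P) {p r e : ℕ} (hp : 0 < p)
    {j : ι} (hj : addOrderOf (P j) = p ^ e) (hre : r < e) {d : ι → ℕ}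
    (hd : p ^ r • ∑ i, d i • P i = 0) : p ∣ d j := by
  rw [nsmul_sum_nsmul_of_modEq P fun i => Nat.ModEq.refl (p ^ r * d i)] at hd
  have h0 := hP.modEq_of_sum_eq (b := 0) (hd.trans (by simp)) j
  rw [hj] at h0
  have hdvd : p ^ r * p ∣ p ^ r * d j :=
    pow_succ p r ▸ (pow_dvd_pow p hre).trans (Nat.modEq_zero_iff_dvd.mp h0)
  exact (Nat.mul_dvd_mul_iff_left (pow_pos hp r)).mp hdvd

theorem IsBasis.exists_not_pow_succ_dvd_of_nuP_eq (hP : IsBasis P) {p r : ℕ} {m : ι → ℕ}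
    (hm : ∀ i, m i < addOrderOf (P i)) (h : nuP p P (∑ i, m i • P i) = r) :
    ∃ j, ¬ p ^ (r + 1) ∣ m j := by
  by_contra! hdvd
  have hle : ((r + 1 : ℕ) : ℕ∞) ≤ nuP p P (∑ i, m i • P i) :=
    le_sSup ⟨r + 1, fun q ⟨hq, hsum⟩ => (hP _).unique ⟨hm, rfl⟩ ⟨hq, hsum⟩ ▸ hdvd, rfl⟩
  rw [h, Nat.cast_le] at hle
  omega

theorem isBasis_iff_bijective :
    IsBasis P ↔ Function.Bijective fun b : (∀ i, Fin (addOrderOf (P i))) => ∑ i, (b i : ℕ) • P i := by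
  refine ⟨fun hP => ⟨fun b c h => ?_, fun g => ?_⟩, fun hbij g => ?_⟩
  · have := (hP _).unique ⟨fun i => (b i).2, rfl⟩ ⟨fun i => (c i).2, h⟩
    exact funext fun i => Fin.ext (congrFun this i)
  · obtain ⟨b, hb, rfl⟩ := (hP g).exists
    exact ⟨fun i => ⟨b i, hb i⟩, rfl⟩
  · obtain ⟨b, rfl⟩ := hbij.2 g
    refine ⟨fun i => b i, ⟨fun i => (b i).2, rfl⟩, fun c ⟨hc, hsum⟩ => ?_⟩
    have := hbij.1 (a₁ := fun i => ⟨c i, hc i⟩) hsum.symm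
    exact funext fun i => congrArg Fin.val (congrFun this i)

theorem IsBasis.card_eq_prod [Fintype G] [DecidableEq ι] (hP : IsBasis P) :
    Fintype.card G = ∏ i, addOrderOf (P i) := by
  rw [← Fintype.card_of_bijective (isBasis_iff_bijective.mp hP)]
  simp

theorem isBasis_of_injective [Fintype G] [DecidableEq ι]
    (hcard : Fintype.card G = ∏ i, addOrderOf (P i))
    (hinj : ∀ b c : ι → ℕ, (∀ i, b i < addOrderOf (P i)) → (∀ i, c i < addOrderOf (P i)) →
      ∑ i, b i • P i = ∑ i, c i • P i → b = c) :
    IsBasis P := by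
  refine isBasis_iff_bijective.mpr ((Fintype.bijective_iff_injective_and_card _).mpr
    ⟨fun b c h => funext fun i => Fin.ext ?_, by simp [hcard]⟩)
  exact congrFun (hinj _ _ (fun i => (b i).2) (fun i => (c i).2) h) i

theorem IsBasis.update_add [Fintype G] [DecidableEq ι] (hP : IsBasis P) {j : ι} {x : G}
    {d : ι → ℕ} (hx : x = ∑ i, d i • P i) (hcop : Nat.Coprime (1 + d j) (addOrderOf (P j)))
    (hord : addOrderOf (P j + x) = addOrderOf (P j)) :
    IsBasis (Function.update P j (P j + x)) := by
  have expand : ∀ b : ι → ℕ, ∑ i, b i • Function.update P j (P j + x) i =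
      ∑ i, (b i + b j * d i) • P i := fun b => by
    rw [sum_nsmul_update_add, hx, Finset.smul_sum, ← Finset.sum_add_distrib]
    exact Finset.sum_congr rfl fun i _ => by rw [add_nsmul, smul_smul]
  refine isBasis_of_injective (by simp [addOrderOf_update_add hord, hP.card_eq_prod])
    fun b c hb hc h => ?_
  simp only [addOrderOf_update_add hord] at hb hc
  have hmod := hP.modEq_of_sum_eq ((expand b).symm.trans (h.trans (expand c)))
  have hj : b j = c j := by
    have hmodj : b j * (1 + d j) ≡ c j * (1 + d j) [MOD addOrderOf (P j)] := by
      simpa only [mul_add, mul_one] using hmod j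
    exact (Nat.ModEq.cancel_right_of_coprime hcop.symm hmodj).eq_of_lt_of_lt (hb j) (hc j)
  funext i
  have hmodi := hmod i
  rw [hj] at hmodi
  exact (Nat.ModEq.add_right_cancel' _ hmodi).eq_of_lt_of_lt (hb i) (hc i)

theorem IsBasis.exists_isBasis_eq_sum_of_pow_nsmul_sub_eq_zero [Fintype G] [DecidableEq ι]
    (hP : IsBasis P) {p r e : ℕ} (hp : p.Prime) {j : ι} (hj : addOrderOf (P j) = p ^ e)
    (hre : r < e) {c : ι → ℕ} (hc : ¬ p ∣ c j) {K : G} (hK : p ^ r • (K - ∑ i, c i • P i) = 0) :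
    ∃ P' : ι → G, IsBasis P' ∧ (∀ i, addOrderOf (P' i) = addOrderOf (P i)) ∧
      K = ∑ i, c i • P' i := by
  set D := K - ∑ i, c i • P i with hD
  have hpe : 1 < p ^ e := Nat.one_lt_pow (by omega) hp.one_lt
  obtain ⟨u, -, hu⟩ := Nat.exists_mul_mod_eq_one_of_coprime
    (((hp.coprime_iff_not_dvd.mpr hc).symm).pow_right e) hpe
  obtain ⟨d, -, hd⟩ := (hP D).exists
  have hpd : p ∣ d j := hP.prime_dvd_of_pow_nsmul_sum_eq_zero hp.pos hj hre (hd ▸ hK)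
  have hcop : Nat.Coprime (1 + u * d j) (addOrderOf (P j)) := by
    rw [hj]
    refine ((hp.coprime_iff_not_dvd.mpr fun h => hp.one_lt.ne' ?_).symm).pow_right e
    exact Nat.dvd_one.mp ((Nat.dvd_add_left (hpd.mul_left u)).mp h)
  have hx : u • D = ∑ i, (u * d i) • P i := by
    rw [hd]
    exact nsmul_sum_nsmul_of_modEq P fun i => Nat.ModEq.refl _
  have hord := addOrderOf_add_eq_left_of_pow_nsmul_eq_zero hp hj
    (by rw [smul_comm (p ^ r) u D, hK, smul_zero]) hre
  have hDfix : (c j * u) • D = D := by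
    have hcu : c j * u ≡ 1 [MOD addOrderOf D] :=
      Nat.ModEq.of_dvd ((addOrderOf_dvd_of_nsmul_eq_zero hK).trans (pow_dvd_pow p hre.le))
        (hu.trans (Nat.mod_eq_of_lt hpe).symm)
    rw [nsmul_eq_nsmul_iff_modEq.mpr hcu, one_nsmul]
  refine ⟨Function.update P j (P j + u • D), hP.update_add hx hcop hord,
    addOrderOf_update_add hord, ?_⟩
  rw [sum_nsmul_update_add, smul_smul, hDfix, hD]
  abel

end Basis

theorem reduced_iff_rep_general {G : Type*} [AddCommGroup G] [Fintype G]
    {p : ℕ} (hp : p.Prime) (hG : ∀ g : G, ∃ k : ℕ, p ^ k • g = 0)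
    {N : ℕ} (Q : Fin N → G) (hQ : IsBasis Q)
    (K K' : G) (m m' : Fin N → ℕ)
    (hmlt : ∀ i, m i < addOrderOf (Q i))
    (r : ℕ) (hr : nuP p Q K = (r : ℕ∞))
    (hred : nuP p Q K = nuP p Q (∑ i, m i • Q i))
    (hKK' : K = p ^ r • K')
    (hmm' : ∀ i, p ^ r * m' i ≡ m i [MOD addOrderOf (Q i)]) :
    (∃ P : Fin N → G, IsBasis P ∧ (∀ i, addOrderOf (P i) = addOrderOf (Q i)) ∧
        K = ∑ i, m i • P i) ↔
    (∃ P : Fin N → G, IsBasis P ∧ (∀ i, addOrderOf (P i) = addOrderOf (Q i)) ∧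
        K' = ∑ i, m' i • P i) := by
  have : Fact p.Prime := ⟨hp⟩
  constructor
  · rintro ⟨P, hP, hPQ, hKP⟩
    have hmmP : ∀ i, p ^ r * m' i ≡ m i [MOD addOrderOf (P i)] := fun i => hPQ i ▸ hmm' i
    obtain ⟨j, hj⟩ := hQ.exists_not_pow_succ_dvd_of_nuP_eq hmlt (hred.symm.trans hr)
    obtain ⟨e, he⟩ := exists_addOrderOf_eq_prime_pow_iff.mpr (hG (Q j))
    obtain ⟨hre, hm'j⟩ := lt_and_not_dvd_of_pow_mul_modEq (he ▸ hmm' j) (he ▸ hmlt j) hj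
    obtain ⟨P', hP', hP'P, hK'⟩ := hP.exists_isBasis_eq_sum_of_pow_nsmul_sub_eq_zero hp
      ((hPQ j).trans he) hre hm'j
      (by rw [smul_sub, ← hKK', nsmul_sum_nsmul_of_modEq P hmmP, hKP, sub_self])
    exact ⟨P', hP', fun i => (hP'P i).trans (hPQ i), hK'⟩
  · rintro ⟨P, hP, hPQ, hK'P⟩
    refine ⟨P, hP, hPQ, ?_⟩
    rw [hKK', hK'P, nsmul_sum_nsmul_of_modEq P fun i => hPQ i ▸ hmm' i]

/-- The root extraction problem is solvable iff its reduced form is solvable. Here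
`r = ν_p K = ν_p (∑ m i • Q i)`, `K = p ^ r • K'`, the canonical coefficients satisfy
`q i = p ^ r * q' i` with `q' i = 0` whenever `q i = 0`, and the reduced multipliers satisfy
`p ^ r * m' i ≡ m i (mod |Q i|)` with `m' i = 0` whenever `m i = 0`. -/
theorem reduced_iff_rep {G : Type*} [AddCommGroup G] [Fintype G]
    {p : ℕ} (hp : p.Prime) (hG : ∀ g : G, ∃ k : ℕ, p ^ k • g = 0)
    {N : ℕ} (Q : Fin N → G) (hQ : IsBasis Q)
    (hQsorted : Monotone fun i => addOrderOf (Q i))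
    (K K' : G) (q q' m m' : Fin N → ℕ)
    (hqlt : ∀ i, q i < addOrderOf (Q i)) (hK : K = ∑ i, q i • Q i)
    (hq'lt : ∀ i, q' i < addOrderOf (Q i)) (hK' : K' = ∑ i, q' i • Q i)
    (hmlt : ∀ i, m i < addOrderOf (Q i)) (hm'lt : ∀ i, m' i < addOrderOf (Q i))
    (r : ℕ) (hr : nuP p Q K = (r : ℕ∞))
    (hred : nuP p Q K = nuP p Q (∑ i, m i • Q i))
    (hKK' : K = p ^ r • K')
    (hqq' : ∀ i, q i = p ^ r * q' i) (hq0 : ∀ i, q i = 0 → q' i = 0)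
    (hmm' : ∀ i, p ^ r * m' i ≡ m i [MOD addOrderOf (Q i)])
    (hm0 : ∀ i, m i = 0 → m' i = 0) :
    (∃ P : Fin N → G, IsBasis P ∧ (∀ i, addOrderOf (P i) = addOrderOf (Q i)) ∧
        K = ∑ i, m i • P i) ↔
    (∃ P : Fin N → G, IsBasis P ∧ (∀ i, addOrderOf (P i) = addOrderOf (Q i)) ∧
        K' = ∑ i, m' i • P i) :=
  reduced_iff_rep_general hp hG Q hQ K K' m m' hmlt r hr hred hKK' hmm'
end

section
/- In G = Z/2 x Z/4 x Z/32 x Z/64 with standard basis, there is no basis {P_1,P_2,P_3,P_4} of G (with |P_i| equal to 2, 4, 32, 64 respectively) such that (0,1,2,0) = 1·P_1 + 1·P_2 + 4·P_3 + 4·P_4. -/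
/-!
Multiplying the relation by `8` kills `P 0`, `P 1` (orders `2`, `4`) and `4 • P 2` (order `32`),
leaving `8 • (0,1,2,0) = 32 • P 3`. But every element of `32 • G` has zero `ℤ/32`-component,
while `8 • (0,1,2,0) = (0,0,16,0)` does not.
-/

theorem nsmul_add_add_nsmul_add_nsmul_of_addOrderOf_dvd {G : Type*} [AddCommGroup G]
    {m k : ℕ} {a b c d : G} (ha : addOrderOf a ∣ m) (hb : addOrderOf b ∣ m)
    (hc : addOrderOf c ∣ m * k) :
    m • (a + b + k • c + k • d) = (m * k) • d := by
  rw [addOrderOf_dvd_iff_nsmul_eq_zero] at ha hb hc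
  rw [smul_add, smul_add, smul_add, smul_smul, smul_smul, ha, hb, hc, zero_add, zero_add, zero_add]

/-- In `ℤ/2 × ℤ/4 × ℤ/32 × ℤ/64` there is no basis `{P₁, P₂, P₃, P₄}` (of orders
`2, 4, 32, 64`) such that `(0,1,2,0) = 1 • P₁ + 1 • P₂ + 4 • P₃ + 4 • P₄`. -/
theorem no_solution_example_two :
    ¬ ∃ P : Fin 4 → ZMod 2 × ZMod 4 × ZMod 32 × ZMod 64, IsBasis P ∧
        addOrderOf (P 0) = 2 ∧ addOrderOf (P 1) = 4 ∧
        addOrderOf (P 2) = 32 ∧ addOrderOf (P 3) = 64 ∧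
        ((0,1,2,0) : ZMod 2 × ZMod 4 × ZMod 32 × ZMod 64) =
          1 • P 0 + 1 • P 1 + 4 • P 2 + 4 • P 3 := by
  rintro ⟨P, -, h0, h1, h2, -, hP⟩
  have h8 : 8 • ((0,1,2,0) : ZMod 2 × ZMod 4 × ZMod 32 × ZMod 64) = 32 • P 3 := by
    rw [hP, one_smul, one_smul]
    exact nsmul_add_add_nsmul_add_nsmul_of_addOrderOf_dvd
      (by rw [h0]; norm_num) (by rw [h1]; norm_num) (by rw [h2])
  have h32 : (32 • P 3).2.2.1 = 0 := by
    simpa only [Prod.smul_snd, Prod.smul_fst, ZMod.card] using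
      card_nsmul_eq_zero (x := (P 3).2.2.1)
  rw [← h8] at h32
  exact absurd h32 (by decide)
end
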